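/- arXiv:2503.00712 — 7 statements merged into one kernel-verified Lean document; each statement's English description precedes it below -/
import Mathlib

section
/- Let G = (V,E) be a finite simple graph, let t ≥ 1 and f ≥ 0 be integers, and let H be a spanning subgraph of G. Suppose that for every edge uv ∈ E ∖ E(H) and every set F ⊆ V ∖ {u,v} with |F| ≤ f one has d_{H∖F}(u,v) ≤ t. Then H is an f-VFT t-spanner of G. (This is the correctness of the greedy algorithm for vertex-fault-tolerant spanners: the greedy output satisfies the hypothesis, hence is a valid f-VFT t-spanner.) -/
open SimpleGraph
open scoped ENNReal

/-- The graph obtained from `G` by deleting the vertices in `F` (the remaining graph is the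
induced subgraph on `V ∖ F`, with the deleted vertices kept as isolated vertices so that the
vertex type is unchanged; distances between surviving vertices agree with the induced subgraph). -/
def SimpleGraph.delVerts {V : Type*} (G : SimpleGraph V) (F : Set V) : SimpleGraph V where
  Adj a b := G.Adj a b ∧ a ∉ F ∧ b ∉ F
  symm := by
    constructor
    intro a b h
    exact ⟨h.1.symm, h.2.2, h.2.1⟩
  loopless := by
    constructor
    intro a h
    exact G.irrefl h.1

/-- `H` is an `f`-vertex-fault-tolerant (`f`-VFT) `t`-spanner of `G`: `H` is a subgraph of `G`
and for every fault set `F ⊆ V` with `|F| ≤ f` and all `u, v ∉ F`,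
`d_{H∖F}(u,v) ≤ t · d_{G∖F}(u,v)` (distances in `ℕ∞`, with `∞` if there is no path). -/
def IsVFTSpanner {V : Type*} (G H : SimpleGraph V) (f t : ℕ) : Prop :=
  H ≤ G ∧ ∀ F : Set V, F.ncard ≤ f → ∀ u v : V, u ∉ F → v ∉ F →
    (H.delVerts F).edist u v ≤ (t : ℕ∞) * (G.delVerts F).edist u v

namespace SimpleGraph

variable {V : Type*} {G H : SimpleGraph V} {t : ℕ∞}

lemma edist_le_mul_length_of_forall_adj (hadj : ∀ a b, G.Adj a b → H.edist a b ≤ t)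
    {u v : V} (p : G.Walk u v) : H.edist u v ≤ t * p.length := by
  induction p with
  | nil => simp
  | @cons x y z hxy p ih =>
    calc H.edist x z ≤ H.edist x y + H.edist y z := SimpleGraph.edist_triangle
      _ ≤ t + t * p.length := add_le_add (hadj x y hxy) ih
      _ = t * (Walk.cons hxy p).length := by push_cast [Walk.length_cons]; ring

lemma edist_le_mul_edist_of_forall_adj (ht : t ≠ 0) (hadj : ∀ a b, G.Adj a b → H.edist a b ≤ t)
    (u v : V) : H.edist u v ≤ t * G.edist u v := by
  obtain hG | hG := eq_or_ne (G.edist u v) ⊤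
  · rw [hG, ENat.mul_top ht]
    exact le_top
  · obtain ⟨p, hp⟩ := exists_walk_of_edist_ne_top hG
    rw [← hp]
    exact edist_le_mul_length_of_forall_adj hadj p

end SimpleGraph

theorem stmt0_general {V : Type*} (G H : SimpleGraph V) (t f : ℕ) (ht : 1 ≤ t)
    (hHG : H ≤ G)
    (hgreedy : ∀ u v : V, G.Adj u v → ¬ H.Adj u v →
      ∀ F : Set V, u ∉ F → v ∉ F → F.ncard ≤ f →
        (H.delVerts F).edist u v ≤ (t : ℕ∞)) :
    IsVFTSpanner G H f t := by
  refine ⟨hHG, fun F hF u v _ _ => edist_le_mul_edist_of_forall_adj (by positivity) ?_ u v⟩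
  rintro a b ⟨hGab, ha, hb⟩
  by_cases hHab : H.Adj a b
  · calc (H.delVerts F).edist a b = 1 := edist_eq_one_iff_adj.mpr ⟨hHab, ha, hb⟩
      _ ≤ t := by exact_mod_cast ht
  · exact hgreedy a b hGab hHab F ha hb hF

/-- Correctness of the greedy algorithm for vertex-fault-tolerant spanners: if `H` is a spanning
subgraph of `G` such that for every non-spanner edge `uv ∈ E(G) ∖ E(H)` and every fault set
`F ⊆ V ∖ {u,v}` of size at most `f` one has `d_{H∖F}(u,v) ≤ t`, then `H` is an
`f`-VFT `t`-spanner of `G`. -/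
theorem stmt0 {V : Type*} [Fintype V] (G H : SimpleGraph V) (t f : ℕ) (ht : 1 ≤ t)
    (hHG : H ≤ G)
    (hgreedy : ∀ u v : V, G.Adj u v → ¬ H.Adj u v →
      ∀ F : Set V, u ∉ F → v ∉ F → F.ncard ≤ f →
        (H.delVerts F).edist u v ≤ (t : ℕ∞)) :
    IsVFTSpanner G H f t :=
  stmt0_general G H t f ht hHG hgreedy
end

section
/- Let t ≥ 2 and f ≥ 0 be integers, let H be an f-VFT t-spanner of a finite simple graph G = (V,E), and let uv ∈ E ∖ E(H). Then H contains L = ⌊f/(t−1)⌋ + 1 pairwise internally vertex-disjoint u–v paths, each containing at most t edges. -/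
open SimpleGraph
open scoped ENNReal

/-!
The paths are found greedily. Suppose `k ≤ ⌊f/(t-1)⌋` internally disjoint `u`–`v` paths of
length at most `t` have been found. Their interior vertices, at most `t - 1` per path, form a
fault set `F` of size at most `k (t - 1) ≤ f` avoiding `u` and `v`. The edge `uv` survives in
`G ∖ F`, so the spanner property gives a `u`–`v` path of length at most `t` in `H ∖ F`, which is
internally disjoint from all the previous ones.
-/

lemma exists_fin_pairwise_of_forall_exists_extend {α : Type*} {good : α → Prop}
    {R : α → α → Prop} [Std.Symm R] (n : ℕ)
    (hext : ∀ k ≤ n, ∀ P : Fin k → α, (∀ i, good (P i)) → ∃ q, good q ∧ ∀ i, R q (P i)) :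
    ∃ P : Fin (n + 1) → α, (∀ i, good (P i)) ∧ Pairwise fun i j => R (P i) (P j) := by
  suffices ∀ m ≤ n + 1, ∃ P : Fin m → α, (∀ i, good (P i)) ∧ Pairwise fun i j => R (P i) (P j)
    from this _ le_rfl
  intro m
  induction m with
  | zero => exact fun _ => ⟨Fin.elim0, fun i => i.elim0, fun i => i.elim0⟩
  | succ m ih =>
    intro hm
    obtain ⟨P, hgood, hR'⟩ := ih (by omega)
    obtain ⟨q, hq, hqP⟩ := hext m (by omega) P hgood
    refine ⟨Fin.snoc P q, Fin.lastCases (by simpa using hq) (by simpa using hgood), ?_⟩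
    intro i j hij
    induction i using Fin.lastCases <;> induction j using Fin.lastCases
    · exact absurd rfl hij
    · simpa using hqP _
    · simpa using symm_of R (hqP _)
    · simpa using hR' (ne_of_apply_ne Fin.castSucc hij)

namespace SimpleGraph

variable {V : Type*} {G : SimpleGraph V} {F : Set V} {u v : V}

lemma delVerts_le (G : SimpleGraph V) (F : Set V) : G.delVerts F ≤ G :=
  fun _ _ h => h.1

lemma Walk.notMem_of_mem_support_delVerts (p : (G.delVerts F).Walk u v) (hu : u ∉ F) :
    ∀ x ∈ p.support, x ∉ F := by
  induction p with
  | nil => simpa using hu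
  | cons h _ ih =>
    simp only [Walk.support_cons, List.mem_cons, forall_eq_or_imp]
    exact ⟨h.2.1, ih h.2.2⟩

lemma Walk.IsPath.card_support_sdiff_ends [DecidableEq V] {p : G.Walk u v} (hp : p.IsPath)
    (huv : u ≠ v) : (p.support.toFinset \ {u, v}).card = p.length - 1 := by
  have hends : ({u, v} : Finset V) ⊆ p.support.toFinset := by
    simp [Finset.insert_subset_iff]
  rw [Finset.card_sdiff_of_subset hends, List.toFinset_card_of_nodup hp.support_nodup,
    Walk.length_support, Finset.card_pair huv]
  omega

def Walk.InternallyDisjoint (p q : G.Walk u v) : Prop :=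
  ∀ x ∈ p.support, x ∈ q.support → x = u ∨ x = v

instance : Std.Symm (Walk.InternallyDisjoint (G := G) (u := u) (v := v)) :=
  ⟨fun _ _ h x hq hp => h x hp hq⟩

end SimpleGraph

lemma IsVFTSpanner.exists_path_avoiding {V : Type*} {G H : SimpleGraph V} {f t : ℕ}
    (hsp : IsVFTSpanner G H f t) {F : Set V} (hF : F.ncard ≤ f) {u v : V} (huv : G.Adj u v)
    (hu : u ∉ F) (hv : v ∉ F) :
    ∃ q : H.Walk u v, q.IsPath ∧ q.length ≤ t ∧ ∀ x ∈ q.support, x ∉ F := by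
  have hdist : (H.delVerts F).edist u v ≤ t := by
    simpa [edist_eq_one_iff_adj.mpr (show (G.delVerts F).Adj u v from ⟨huv, hu, hv⟩)]
      using hsp.2 F hF u v hu hv
  have hreach : (H.delVerts F).Reachable u v :=
    reachable_of_edist_ne_top (ne_top_of_le_ne_top (ENat.natCast_ne_top t) hdist)
  obtain ⟨q, hq, hqlen⟩ := hreach.exists_path_of_dist
  refine ⟨q.mapLe (delVerts_le H F), hq.mapLe _, ?_, ?_⟩
  · rw [Walk.length_mapLe, hqlen]
    exact_mod_cast hreach.coe_dist_eq_edist ▸ hdist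
  · rw [Walk.support_mapLe_eq_support]
    exact q.notMem_of_mem_support_delVerts hu

lemma IsVFTSpanner.exists_path_internally_disjoint {V : Type*} {G H : SimpleGraph V}
    {f t : ℕ} (hsp : IsVFTSpanner G H f t) {u v : V} (huv : G.Adj u v) {k : ℕ}
    (hk : k ≤ f / (t - 1)) (P : Fin k → H.Walk u v) (hP : ∀ i, (P i).IsPath ∧ (P i).length ≤ t) :
    ∃ q : H.Walk u v, (q.IsPath ∧ q.length ≤ t) ∧
      ∀ i, q.InternallyDisjoint (P i) := by
  classical
  set F : Finset V := Finset.univ.biUnion fun i => (P i).support.toFinset \ {u, v}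
  have hF : (F : Set V).ncard ≤ f := by
    rw [Set.ncard_coe_finset]
    calc F.card ≤ ∑ i, ((P i).support.toFinset \ {u, v}).card := Finset.card_biUnion_le
      _ ≤ ∑ _i : Fin k, (t - 1) := Finset.sum_le_sum fun i _ => by
          rw [(hP i).1.card_support_sdiff_ends huv.ne]
          exact Nat.sub_le_sub_right (hP i).2 1
      _ = k * (t - 1) := by simp
      _ ≤ f / (t - 1) * (t - 1) := Nat.mul_le_mul_right _ hk
      _ ≤ f := Nat.div_mul_le_self _ _
  obtain ⟨q, hq, hqlen, hqF⟩ := hsp.exists_path_avoiding hF huv (by simp [F]) (by simp [F])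
  refine ⟨q, ⟨hq, hqlen⟩, fun i x hxq hxP => ?_⟩
  by_contra hx
  exact hqF x hxq (by simpa [F, hx] using ⟨i, hxP⟩)

theorem stmt2_general {V : Type*} (G H : SimpleGraph V) (t f : ℕ)
    (hsp : IsVFTSpanner G H f t) (u v : V) (huv : G.Adj u v) :
    ∃ P : Fin (f / (t - 1) + 1) → H.Walk u v,
      (∀ i, (P i).IsPath) ∧ (∀ i, (P i).length ≤ t) ∧
      (∀ i j, i ≠ j → ∀ x : V, x ∈ (P i).support → x ∈ (P j).support → x = u ∨ x = v) := by
  obtain ⟨P, hP, hdisj⟩ := exists_fin_pairwise_of_forall_exists_extend (f / (t - 1))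
    fun _ hk P hP => hsp.exists_path_internally_disjoint huv hk P hP
  exact ⟨P, fun i => (hP i).1, fun i => (hP i).2, fun _ _ hij => hdisj hij⟩

/-- If `H` is an `f`-VFT `t`-spanner of `G` (with `t ≥ 2`) and `uv ∈ E(G) ∖ E(H)`, then `H`
contains `L = ⌊f/(t−1)⌋ + 1` pairwise internally vertex-disjoint `u`–`v` paths, each with at
most `t` edges. -/
theorem stmt2 {V : Type*} [Fintype V] (G H : SimpleGraph V) (t f : ℕ) (ht : 2 ≤ t)
    (hsp : IsVFTSpanner G H f t) (u v : V) (huv : G.Adj u v) (hnotH : ¬ H.Adj u v) :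
    ∃ P : Fin (f / (t - 1) + 1) → H.Walk u v,
      (∀ i, (P i).IsPath) ∧ (∀ i, (P i).length ≤ t) ∧
      (∀ i j, i ≠ j → ∀ x : V, x ∈ (P i).support → x ∈ (P j).support → x = u ∨ x = v) :=
  stmt2_general G H t f hsp u v huv
end

section
/- Let t ≥ 1 and f ≥ 0 be integers, let H be an f-EFT t-spanner of a finite simple graph G = (V,E), and let uv ∈ E ∖ E(H). Then H contains ⌊f/t⌋ + 1 pairwise edge-disjoint u–v paths, each containing at most t edges. -/
/-!
Let `P₁, …, Pₖ` be edge-disjoint `u`–`v` paths of length at most `t` in `H`, with `k ≤ ⌊f/t⌋`.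
Their edges form a fault set `F` of at most `k t ≤ f` edges of `H`, and `uv ∉ F` because `uv`
is not an edge of `H`. So `u, v` are adjacent in `G ∖ F`, and the spanner property gives a
`u`–`v` path of length at most `t` in `H ∖ F`, which extends the family. Starting from the empty
family this yields `⌊f/t⌋ + 1` paths.
-/

open SimpleGraph
open scoped ENNReal

/-- `H` is an `f`-edge-fault-tolerant (`f`-EFT) `t`-spanner of `G`. -/
def IsEFTSpanner {V : Type*} (G H : SimpleGraph V) (f t : ℕ) : Prop :=
  H ≤ G ∧ ∀ F : Set (Sym2 V), F ⊆ G.edgeSet → F.ncard ≤ f → ∀ u v : V,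
    (H.deleteEdges F).edist u v ≤ (t : ℕ∞) * (G.deleteEdges F).edist u v

theorem Pairwise.fin_snoc {α : Type*} {r : α → α → Prop} (hr : ∀ a b, r a b → r b a) {n : ℕ}
    {P : Fin n → α} {a : α} (hP : Pairwise fun i j => r (P i) (P j)) (ha : ∀ i, r (P i) a) :
    Pairwise fun i j =>
      r (Fin.snoc (α := fun _ => α) P a i) (Fin.snoc (α := fun _ => α) P a j) := by
  intro i j hij
  rcases Fin.eq_castSucc_or_eq_last i with ⟨i, rfl⟩ | rfl <;>
    rcases Fin.eq_castSucc_or_eq_last j with ⟨j, rfl⟩ | rfl <;>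
    simp only [Fin.snoc_castSucc, Fin.snoc_last]
  · exact hP fun h => hij (congrArg _ h)
  · exact ha i
  · exact hr _ _ (ha j)
  · exact absurd rfl hij

namespace SimpleGraph

variable {V : Type*}

theorem exists_isPath_length_le_of_edist_le {G : SimpleGraph V} {u v : V} {n : ℕ}
    (h : G.edist u v ≤ n) : ∃ p : G.Walk u v, p.IsPath ∧ p.length ≤ n := by
  classical
  obtain ⟨p, hp⟩ := exists_walk_of_edist_ne_top (h.trans_lt (ENat.natCast_lt_top n)).ne
  refine ⟨p.bypass, p.bypass_isPath, p.length_bypass_le_length.trans ?_⟩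
  exact_mod_cast hp ▸ h

theorem Walk.card_biUnion_edges_le [DecidableEq V] {G : SimpleGraph V} {ι : Type*} [Fintype ι]
    {u v : V} (P : ι → G.Walk u v) {t : ℕ} (hlen : ∀ i, (P i).length ≤ t) :
    (Finset.univ.biUnion fun i => (P i).edges.toFinset).card ≤ Fintype.card ι * t :=
  calc _ ≤ ∑ i, (P i).edges.toFinset.card := Finset.card_biUnion_le
    _ ≤ ∑ _i : ι, t := Finset.sum_le_sum fun i _ =>
        (P i).edges.toFinset_card_le.trans ((P i).length_edges ▸ hlen i)
    _ = Fintype.card ι * t := by simp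

end SimpleGraph

namespace IsEFTSpanner

variable {V : Type*} {G H : SimpleGraph V} {f t : ℕ} {u v : V}

theorem exists_short_path_avoiding (hsp : IsEFTSpanner G H f t) {F : Set (Sym2 V)}
    (hFG : F ⊆ G.edgeSet) (hF : F.ncard ≤ f) (huv : (G.deleteEdges F).Adj u v) :
    ∃ p : H.Walk u v, p.IsPath ∧ p.length ≤ t ∧ ∀ e ∈ p.edges, e ∉ F := by
  have hdist : (H.deleteEdges F).edist u v ≤ t := by
    simpa [edist_eq_one_iff_adj.mpr huv] using hsp.2 F hFG hF u v
  obtain ⟨p, hpath, hlen⟩ := exists_isPath_length_le_of_edist_le hdist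
  refine ⟨p.mapLe (deleteEdges_le F), hpath.mapLe _, (Walk.length_mapLe _ _).trans_le hlen, ?_⟩
  intro e he
  rw [Walk.edges_mapLe_eq_edges] at he
  have := p.edges_subset_edgeSet he
  rw [edgeSet_deleteEdges] at this
  exact this.2

theorem exists_short_path_edges_disjoint (hsp : IsEFTSpanner G H f t) (huv : G.Adj u v)
    (hnotH : ¬ H.Adj u v) {ι : Type*} [Fintype ι] (P : ι → H.Walk u v)
    (hlen : ∀ i, (P i).length ≤ t) (hk : Fintype.card ι * t ≤ f) :
    ∃ q : H.Walk u v, q.IsPath ∧ q.length ≤ t ∧ ∀ i, (P i).edges.Disjoint q.edges := by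
  classical
  set F : Finset (Sym2 V) := Finset.univ.biUnion fun i => (P i).edges.toFinset
  have hFH : (F : Set (Sym2 V)) ⊆ H.edgeSet := by
    intro e he
    obtain ⟨i, -, hi⟩ := Finset.mem_biUnion.mp he
    exact (P i).edges_subset_edgeSet (List.mem_toFinset.mp hi)
  have hF : (F : Set (Sym2 V)).ncard ≤ f := by
    rw [Set.ncard_coe_finset]
    exact (Walk.card_biUnion_edges_le P hlen).trans hk
  have huvF : (G.deleteEdges F).Adj u v :=
    deleteEdges_adj.mpr ⟨huv, fun h => hnotH (hFH h)⟩
  obtain ⟨q, hq, hqlen, hqF⟩ :=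
    hsp.exists_short_path_avoiding (hFH.trans (edgeSet_mono hsp.1)) hF huvF
  refine ⟨q, hq, hqlen, fun i e hPe hqe => hqF e hqe ?_⟩
  exact Finset.mem_biUnion.mpr ⟨i, Finset.mem_univ i, List.mem_toFinset.mpr hPe⟩

theorem exists_edgeDisjoint_short_paths (hsp : IsEFTSpanner G H f t) (huv : G.Adj u v)
    (hnotH : ¬ H.Adj u v) {k : ℕ} (hk : k ≤ f / t + 1) :
    ∃ P : Fin k → H.Walk u v, (∀ i, (P i).IsPath) ∧ (∀ i, (P i).length ≤ t) ∧
      Pairwise fun i j => (P i).edges.Disjoint (P j).edges := by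
  induction k with
  | zero => exact ⟨Fin.elim0, fun i => i.elim0, fun i => i.elim0, fun i => i.elim0⟩
  | succ k ih =>
    obtain ⟨P, hpath, hlen, hdisj⟩ := ih (by omega)
    have hkt : Fintype.card (Fin k) * t ≤ f := by
      rw [Fintype.card_fin]
      exact (Nat.mul_le_mul_right t (by omega)).trans (Nat.div_mul_le_self f t)
    obtain ⟨q, hq, hqlen, hqdisj⟩ := hsp.exists_short_path_edges_disjoint huv hnotH P hlen hkt
    refine ⟨Fin.snoc P q, Fin.lastCases ?_ ?_, Fin.lastCases ?_ ?_,
      hdisj.fin_snoc (r := fun p q : H.Walk u v => p.edges.Disjoint q.edges)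
        (fun _ _ h => h.symm) hqdisj⟩ <;>
      simp only [Fin.snoc_castSucc, Fin.snoc_last, hpath, hq, hlen, hqlen, implies_true]

end IsEFTSpanner

theorem stmt3_general {V : Type*} (G H : SimpleGraph V) (t f : ℕ)
    (hsp : IsEFTSpanner G H f t) (u v : V) (huv : G.Adj u v) (hnotH : ¬ H.Adj u v) :
    ∃ P : Fin (f / t + 1) → H.Walk u v,
      (∀ i, (P i).IsPath) ∧ (∀ i, (P i).length ≤ t) ∧
      (∀ i j, i ≠ j → ∀ e : Sym2 V, e ∈ (P i).edges → e ∉ (P j).edges) :=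
  hsp.exists_edgeDisjoint_short_paths huv hnotH le_rfl

/-- If `H` is an `f`-EFT `t`-spanner of `G` (with `t ≥ 1`) and `uv ∈ E(G) ∖ E(H)`, then `H`
contains `⌊f/t⌋ + 1` pairwise edge-disjoint `u`–`v` paths, each with at most `t` edges. -/
theorem stmt3 {V : Type*} [Fintype V] (G H : SimpleGraph V) (t f : ℕ) (ht : 1 ≤ t)
    (hsp : IsEFTSpanner G H f t) (u v : V) (huv : G.Adj u v) (hnotH : ¬ H.Adj u v) :
    ∃ P : Fin (f / t + 1) → H.Walk u v,
      (∀ i, (P i).IsPath) ∧ (∀ i, (P i).length ≤ t) ∧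
      (∀ i j, i ≠ j → ∀ e : Sym2 V, e ∈ (P i).edges → e ∉ (P j).edges) :=
  stmt3_general G H t f hsp u v huv hnotH
end

section
/- Let G = (E-edge tree on vertex set V) be a tree rooted at r with |V| ≥ 3, and let OPT be a set of links such that (V, E(G) ∪ OPT) is 2-vertex-connected. Let SOL be a set of links satisfying: (i) for every link {u,v} ∈ OPT, SOL contains a link {u,v'} with d_G(r, LCA(u,v')) ≤ d_G(r, LCA(u,v)) and a link {u',v} with d_G(r, LCA(u',v)) ≤ d_G(r, LCA(u,v)); and (ii) for every vertex a ∈ V, the following auxiliary graph is connected: its nodes are the bad children of a, each representing its subtree G_v, together with (if a has at least one good child) one extra node representing the union of the subtrees of all good children of a, and two nodes are joined by an edge whenever SOL contains a link with one endpoint in the vertex set represented by one node and its other endpoint in the vertex set represented by the other node. Then (V, E(G) ∪ SOL) is 2-vertex-connected. -/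
open SimpleGraph

/-- A graph (on at least 3 vertices) is 2-vertex-connected if it is connected and the deletion of
any single vertex leaves it connected. -/
def TwoVertexConnected {V : Type*} (H : SimpleGraph V) : Prop :=
  H.Connected ∧ ∀ a : V, (H.induce ({a}ᶜ : Set V)).Connected

/-- In a tree `G` rooted at `r`, the vertex `a` lies on the (unique) path from `r` to `v`;
equivalently, `v` belongs to the subtree `G_a` rooted at `a`. -/
def OnRootPath {V : Type*} (G : SimpleGraph V) (r a v : V) : Prop :=
  ∀ p : G.Walk r v, p.IsPath → a ∈ p.support

/-- The vertex set `G_a` of the subtree rooted at `a` (in the tree `G` rooted at `r`). -/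
def subtreeSet {V : Type*} (G : SimpleGraph V) (r a : V) : Set V :=
  {v | OnRootPath G r a v}

/-- `v` is a child of `a` in the tree `G` rooted at `r`. -/
def IsChild {V : Type*} (G : SimpleGraph V) (r a v : V) : Prop :=
  G.Adj a v ∧ OnRootPath G r a v

/-- `a` is the lowest common ancestor of `u` and `v` in the tree `G` rooted at `r`: it lies on
both root paths, and every vertex lying on both root paths is an ancestor of `a`. -/
def IsLCA {V : Type*} (G : SimpleGraph V) (r a u v : V) : Prop :=
  OnRootPath G r a u ∧ OnRootPath G r a v ∧
    ∀ b : V, OnRootPath G r b u → OnRootPath G r b v → OnRootPath G r b a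

/-- A child `v` of `a` is good (w.r.t. the link set `L`): `L` contains a link with one endpoint
in `G_v` and the other endpoint in `V ∖ G_a`. -/
def IsGoodChild {V : Type*} (G : SimpleGraph V) (r : V) (L : Set (Sym2 V)) (a v : V) : Prop :=
  IsChild G r a v ∧ ∃ x ∈ subtreeSet G r v, ∃ y ∈ (subtreeSet G r a)ᶜ, s(x, y) ∈ L

/-- The node set of the auxiliary graph at `a`: one node (a vertex set) for the subtree of each
bad child of `a`, plus — if `a` has at least one good child — one extra node which is the union
of the subtrees of all good children of `a`. -/
def auxParts {V : Type*} (G : SimpleGraph V) (r : V) (L : Set (Sym2 V)) (a : V) :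
    Set (Set V) :=
  {S | ∃ v : V, IsChild G r a v ∧ ¬ IsGoodChild G r L a v ∧ S = subtreeSet G r v} ∪
    {S | (∃ v : V, IsGoodChild G r L a v) ∧
      S = ⋃ v ∈ {v : V | IsGoodChild G r L a v}, subtreeSet G r v}

/-- Two nodes of the auxiliary graph are adjacent (w.r.t. a link set `SOL`) when they are distinct
members of `P` and `SOL` contains a link with one endpoint in each of the two vertex sets. -/
def auxAdj {V : Type*} (SOL : Set (Sym2 V)) (P : Set (Set V)) (A B : Set V) : Prop :=
  A ∈ P ∧ B ∈ P ∧ A ≠ B ∧ ∃ x ∈ A, ∃ y ∈ B, s(x, y) ∈ SOL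

/-- The auxiliary graph with node set `P` and `SOL`-adjacency is connected. -/
def auxConnected {V : Type*} (SOL : Set (Sym2 V)) (P : Set (Set V)) : Prop :=
  ∀ A ∈ P, ∀ B ∈ P, Relation.ReflTransGen (auxAdj SOL P) A B


/-! If `a` is removed, every vertex outside the subtree `G_a` still reaches the root `r` along
the tree. A vertex in the subtree of a good child `v` of `a` reaches the root as well: the `OPT`
link leaving `G_v` past `a` has, by (i), a counterpart in `SOL` whose lowest common ancestor is no
deeper, so that link also leaves `G_a`. The remaining vertices of `G_a` lie in the subtrees of bad
children, and (ii) joins these subtrees through `SOL` links to the good ones. If `a ≠ r` it has a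
good child, since 2-connectivity of the tree plus `OPT` forces an `OPT` link leaving `G_a ∖ {a}`;
if `a = r` every child is bad and (ii) alone connects all subtrees. -/

section

variable {V : Type*}

namespace SimpleGraph

def ReachableAvoiding (H : SimpleGraph V) (a x y : V) : Prop :=
  ∃ W : H.Walk x y, a ∉ W.support

namespace ReachableAvoiding

variable {H H' : SimpleGraph V} {a x y z : V}

lemma refl (hx : x ≠ a) : H.ReachableAvoiding a x x :=
  ⟨.nil, by simpa using hx.symm⟩

lemma symm (h : H.ReachableAvoiding a x y) : H.ReachableAvoiding a y x :=
  let ⟨W, hW⟩ := h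
  ⟨W.reverse, by simpa using hW⟩

lemma trans (h₁ : H.ReachableAvoiding a x y) (h₂ : H.ReachableAvoiding a y z) :
    H.ReachableAvoiding a x z :=
  let ⟨W₁, hW₁⟩ := h₁
  let ⟨W₂, hW₂⟩ := h₂
  ⟨W₁.append W₂, by simp [Walk.mem_support_append_iff, hW₁, hW₂]⟩

lemma ne_left (h : H.ReachableAvoiding a x y) : x ≠ a :=
  let ⟨W, hW⟩ := h
  fun hx => hW (hx ▸ W.start_mem_support)

lemma ne_right (h : H.ReachableAvoiding a x y) : y ≠ a :=
  h.symm.ne_left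

lemma mono (hle : H ≤ H') (h : H.ReachableAvoiding a x y) : H'.ReachableAvoiding a x y :=
  let ⟨W, hW⟩ := h
  ⟨W.mapLe hle, by rwa [Walk.support_mapLe_eq_support]⟩

lemma of_adj (hxy : H.Adj x y) (hx : x ≠ a) (hy : y ≠ a) : H.ReachableAvoiding a x y :=
  ⟨.cons hxy .nil, by simp [hx.symm, hy.symm]⟩

lemma of_link {L : Set (Sym2 V)} (hL : ∀ ⦃x y⦄, s(x, y) ∈ L → x ≠ y → H.Adj x y)
    (h : s(x, y) ∈ L) (hx : x ≠ a) (hy : y ≠ a) : H.ReachableAvoiding a x y := by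
  rcases eq_or_ne x y with rfl | hne
  · exact refl hx
  · exact of_adj (hL h hne) hx hy

lemma induce_reachable (h : H.ReachableAvoiding a x y) :
    (H.induce {a}ᶜ).Reachable ⟨x, h.ne_left⟩ ⟨y, h.ne_right⟩ :=
  let ⟨W, hW⟩ := h
  (W.induce {a}ᶜ fun _ hz hza => hW (hza ▸ hz)).reachable

end ReachableAvoiding

lemma connected_induce_compl_singleton_of_reachableAvoiding {H : SimpleGraph V} {a b : V}
    (hb : b ≠ a) (h : ∀ x y, x ≠ a → y ≠ a → H.ReachableAvoiding a x y) :
    (H.induce {a}ᶜ).Connected := by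
  rw [connected_iff]
  exact ⟨fun ⟨x, hx⟩ ⟨y, hy⟩ => (h x y hx hy).induce_reachable, ⟨⟨b, hb⟩⟩⟩

end SimpleGraph

section RootPath

variable {G : SimpleGraph V} {r a b v x y : V}

lemma onRootPath_iff_forall_walk : OnRootPath G r a v ↔ ∀ W : G.Walk r v, a ∈ W.support := by
  classical
  exact ⟨fun h W => W.support_bypass_subset_support (h _ W.bypass_isPath), fun h p _ => h p⟩

lemma onRootPath_root : OnRootPath G r r v :=
  fun p _ => p.start_mem_support

lemma onRootPath_self : OnRootPath G r v v :=
  fun p _ => p.end_mem_support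

lemma OnRootPath.eq_root (h : OnRootPath G r a r) : a = r := by
  simpa using h .nil .nil

lemma OnRootPath.trans (hab : OnRootPath G r a b) (hbv : OnRootPath G r b v) :
    OnRootPath G r a v := by
  classical
  rw [onRootPath_iff_forall_walk] at *
  exact fun W => W.support_takeUntil_subset_support (hbv W) (hab _)

lemma reachableAvoiding_root_of_not_onRootPath (h : ¬ OnRootPath G r a x) :
    G.ReachableAvoiding a x r := by
  obtain ⟨p, -, hp⟩ := not_forall₂.1 h
  exact ⟨p.reverse, by simpa using hp⟩

lemma OnRootPath.eq_of_adj (hx : OnRootPath G r a x) (hy : ¬ OnRootPath G r a y)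
    (hxy : G.Adj x y) : x = a := by
  obtain ⟨W, hW⟩ := (reachableAvoiding_root_of_not_onRootPath hy).symm
  have := onRootPath_iff_forall_walk.1 hx (W.concat hxy.symm)
  simp only [Walk.support_concat, List.mem_append, List.mem_singleton] at this
  exact (this.resolve_left hW).symm

lemma OnRootPath.dist_add_dist_le (hG : G.Connected) (h : OnRootPath G r a v) :
    G.dist r a + G.dist a v ≤ G.dist r v := by
  classical
  obtain ⟨W, hW⟩ := hG.exists_walk_length_eq_dist r v
  have ha := onRootPath_iff_forall_walk.1 h W
  calc G.dist r a + G.dist a v ≤ (W.takeUntil a ha).length + (W.dropUntil a ha).length :=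
        add_le_add (dist_le _) (dist_le _)
    _ = G.dist r v := by rw [← Walk.length_append, W.take_spec, hW]

lemma OnRootPath.dist_le (hG : G.Connected) (h : OnRootPath G r a v) :
    G.dist r a ≤ G.dist r v :=
  (Nat.le_add_right _ _).trans (h.dist_add_dist_le hG)

lemma OnRootPath.eq_of_dist_le (hG : G.Connected) (h : OnRootPath G r a v)
    (hd : G.dist r v ≤ G.dist r a) : a = v :=
  (hG.dist_eq_zero_iff).1 (by have := h.dist_add_dist_le hG; omega)

end RootPath

section Tree

variable {G : SimpleGraph V} {r a b v x y : V}

lemma SimpleGraph.IsTree.onRootPath_iff_mem_support (hG : G.IsTree) {p : G.Walk r v}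
    (hp : p.IsPath) : OnRootPath G r a v ↔ a ∈ p.support :=
  ⟨fun h => h p hp, fun h q hq => by rwa [(hG.existsUnique_path r v).unique hq hp]⟩

lemma SimpleGraph.IsTree.onRootPath_total (hG : G.IsTree) (ha : OnRootPath G r a x)
    (hb : OnRootPath G r b x) : OnRootPath G r a b ∨ OnRootPath G r b a := by
  obtain ⟨p, hp⟩ := (hG.existsUnique_path r x).exists
  obtain ⟨q, s, hq, hs, rfl⟩ := hp.mem_support_iff_exists_append.1 (hb _ hp)
  rcases (Walk.mem_support_append_iff _ _).1 (ha _ hp) with haq | has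
  · exact .inl ((hG.onRootPath_iff_mem_support hq).2 haq)
  · obtain ⟨s₁, s₂, -, -, rfl⟩ := hs.mem_support_iff_exists_append.1 has
    rw [Walk.append_assoc] at hp
    exact .inr ((hG.onRootPath_iff_mem_support hp.of_append_left).2
      ((Walk.mem_support_append_iff _ _).2 (.inl q.end_mem_support)))

lemma SimpleGraph.IsTree.exists_isLCA (hG : G.IsTree) (u w : V) : ∃ c, IsLCA G r c u w := by
  classical
  obtain ⟨p, hp⟩ := (hG.existsUnique_path r u).exists
  obtain ⟨c, hc, hmax⟩ := Finset.exists_max_image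
    (p.support.toFinset.filter fun c => OnRootPath G r c w) (G.dist r)
    ⟨r, by simp [onRootPath_root]⟩
  simp only [Finset.mem_filter, List.mem_toFinset] at hc hmax
  have hcu := (hG.onRootPath_iff_mem_support hp).2 hc.1
  refine ⟨c, hcu, hc.2, fun b hbu hbw => ?_⟩
  rcases hG.onRootPath_total hbu hcu with hbc | hcb
  · exact hbc
  · rw [hcb.eq_of_dist_le hG.connected (hmax b ⟨hbu p hp, hbw⟩)]
    exact onRootPath_self

lemma SimpleGraph.IsTree.exists_isChild_of_onRootPath (hG : G.IsTree) (h : OnRootPath G r a x)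
    (hx : x ≠ a) : ∃ v, IsChild G r a v ∧ OnRootPath G r v x := by
  obtain ⟨p, hp⟩ := (hG.existsUnique_path r x).exists
  obtain ⟨q, s, -, hs, rfl⟩ := hp.mem_support_iff_exists_append.1 (h _ hp)
  cases s with
  | nil => exact absurd rfl hx
  | cons hav t =>
    refine ⟨_, ⟨hav, ?_⟩, (hG.onRootPath_iff_mem_support hp).2 (by simp)⟩
    by_contra hv
    obtain ⟨W, hW⟩ := (reachableAvoiding_root_of_not_onRootPath hv).symm
    have hat : a ∉ t.support := ((Walk.cons_isPath_iff _ _).1 hs).2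
    exact (Walk.mem_support_append_iff _ _).1 (onRootPath_iff_forall_walk.1 h (W.append t))
      |>.elim hW hat

lemma SimpleGraph.IsTree.reachableAvoiding_of_isChild (hG : G.IsTree) (hv : IsChild G r a v)
    (hx : OnRootPath G r v x) (hy : OnRootPath G r v y) : G.ReachableAvoiding a x y := by
  have from_child : ∀ {z}, OnRootPath G r v z → G.ReachableAvoiding a v z := by
    intro z hz
    obtain ⟨p, hp⟩ := (hG.existsUnique_path r z).exists
    obtain ⟨q, s, hq, -, rfl⟩ := hp.mem_support_iff_exists_append.1 (hz p hp)
    exact ⟨s, fun has => hp.ne_of_mem_support_of_append hv.1.ne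
      ((hG.onRootPath_iff_mem_support hq).1 hv.2) has rfl⟩
  exact (from_child hx).symm.trans (from_child hy)

lemma SimpleGraph.IsTree.not_onRootPath_of_dist_isLCA_le (hG : G.IsTree) {y' : V}
    (hx : OnRootPath G r a x) (hy : ¬ OnRootPath G r a y)
    (hd : ∀ c d, IsLCA G r c x y' → IsLCA G r d x y → G.dist r c ≤ G.dist r d) :
    ¬ OnRootPath G r a y' := by
  intro hy'
  obtain ⟨c, hc⟩ := hG.exists_isLCA (r := r) x y
  obtain ⟨c', hc'⟩ := hG.exists_isLCA (r := r) x y'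
  have hac : G.dist r a ≤ G.dist r c :=
    ((hc'.2.2 a hx hy').dist_le hG.connected).trans (hd c' c hc' hc)
  rcases hG.onRootPath_total hx hc.1 with hac' | hca
  · exact hy (hac'.trans hc.2.1)
  · exact hy (hca.eq_of_dist_le hG.connected hac ▸ hc.2.1)

end Tree

section Augmentation

variable {G H : SimpleGraph V} {r a v x y : V} {OPT SOL : Set (Sym2 V)} {S T : Set V}

lemma IsGoodChild.reachableAvoiding_root (hG : G.IsTree) (hGH : G ≤ H)
    (hSOL : ∀ ⦃x y⦄, s(x, y) ∈ SOL → x ≠ y → H.Adj x y)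
    (hi : ∀ u w, s(u, w) ∈ OPT → ∃ w', s(u, w') ∈ SOL ∧
      ∀ c d, IsLCA G r c u w' → IsLCA G r d u w → G.dist r c ≤ G.dist r d)
    (hv : IsGoodChild G r OPT a v) (hx : OnRootPath G r v x) : H.ReachableAvoiding a x r := by
  obtain ⟨hva, x₀, hx₀, y₀, hy₀, hlink⟩ := hv
  obtain ⟨y₁, hsol, hd⟩ := hi x₀ y₀ hlink
  have hxx₀ := (hG.reachableAvoiding_of_isChild hva hx hx₀).mono hGH
  have hy₁r := (reachableAvoiding_root_of_not_onRootPath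
    (hG.not_onRootPath_of_dist_isLCA_le (hva.2.trans hx₀) hy₀ hd)).mono hGH
  exact hxx₀.trans ((ReachableAvoiding.of_link hSOL hsol hxx₀.ne_right hy₁r.ne_left).trans hy₁r)

lemma reachableAvoiding_of_mem_auxParts (hG : G.IsTree) (hGH : G ≤ H)
    (hSOL : ∀ ⦃x y⦄, s(x, y) ∈ SOL → x ≠ y → H.Adj x y)
    (hi : ∀ u w, s(u, w) ∈ OPT → ∃ w', s(u, w') ∈ SOL ∧
      ∀ c d, IsLCA G r c u w' → IsLCA G r d u w → G.dist r c ≤ G.dist r d)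
    (hS : S ∈ auxParts G r OPT a) : ∀ x ∈ S, ∀ y ∈ S, H.ReachableAvoiding a x y := by
  rcases hS with ⟨v, hv, -, rfl⟩ | ⟨-, rfl⟩ <;> intro x hx y hy
  · exact (hG.reachableAvoiding_of_isChild hv hx hy).mono hGH
  · obtain ⟨v, hv, hxv⟩ := Set.mem_iUnion₂.1 hx
    obtain ⟨w, hw, hyw⟩ := Set.mem_iUnion₂.1 hy
    exact (hv.reachableAvoiding_root hG hGH hSOL hi hxv).trans
      (hw.reachableAvoiding_root hG hGH hSOL hi hyw).symm

lemma SimpleGraph.ReachableAvoiding.of_reflTransGen_auxAdj {P : Set (Set V)}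
    (hSOL : ∀ ⦃x y⦄, s(x, y) ∈ SOL → x ≠ y → H.Adj x y)
    (hP : ∀ S ∈ P, ∀ x ∈ S, ∀ y ∈ S, H.ReachableAvoiding a x y) (hS : S ∈ P)
    (hST : Relation.ReflTransGen (auxAdj SOL P) S T) :
    ∀ x ∈ S, ∀ y ∈ T, H.ReachableAvoiding a x y := by
  induction hST with
  | refl => exact hP S hS
  | tail _ hadj ih =>
    obtain ⟨-, hT, -, p, hp, q, hq, hpq⟩ := hadj
    intro x hx y hy
    have hxp := ih x hx p hp
    have hqy := hP _ hT q hq y hy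
    exact hxp.trans ((ReachableAvoiding.of_link hSOL hpq hxp.ne_right hqy.ne_left).trans hqy)

lemma exists_mem_auxParts (hG : G.IsTree) (L : Set (Sym2 V)) (h : OnRootPath G r a x)
    (hx : x ≠ a) : ∃ S ∈ auxParts G r L a, x ∈ S := by
  obtain ⟨v, hv, hvx⟩ := hG.exists_isChild_of_onRootPath h hx
  by_cases hgood : IsGoodChild G r L a v
  · exact ⟨_, .inr ⟨⟨v, hgood⟩, rfl⟩, Set.mem_biUnion hgood hvx⟩
  · exact ⟨_, .inl ⟨v, hv, hgood, rfl⟩, hvx⟩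

lemma exists_isGoodChild (hG : G.IsTree)
    (hOPT : ((fromEdgeSet (G.edgeSet ∪ OPT)).induce {a}ᶜ).Preconnected) (har : a ≠ r)
    (h : OnRootPath G r a x) (hx : x ≠ a) : ∃ v, IsGoodChild G r OPT a v := by
  obtain ⟨W⟩ := hOPT ⟨x, hx⟩ ⟨r, har.symm⟩
  obtain ⟨d, -, hp, hq⟩ := W.exists_boundary_dart (Subtype.val ⁻¹' subtreeSet G r a) h
    fun hr => har hr.eq_root
  obtain ⟨hpq | hpq, -⟩ := (fromEdgeSet_adj _).1 (induce_adj.1 d.adj)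
  · exact absurd (OnRootPath.eq_of_adj hp hq hpq) d.fst.2
  · obtain ⟨v, hv, hvp⟩ := hG.exists_isChild_of_onRootPath hp d.fst.2
    exact ⟨v, hv, _, hvp, _, hq, hpq⟩

lemma reachableAvoiding_of_ne (hG : G.IsTree) (hGH : G ≤ H)
    (hSOL : ∀ ⦃x y⦄, s(x, y) ∈ SOL → x ≠ y → H.Adj x y)
    (hOPT : ((fromEdgeSet (G.edgeSet ∪ OPT)).induce {a}ᶜ).Preconnected)
    (hi : ∀ u w, s(u, w) ∈ OPT → ∃ w', s(u, w') ∈ SOL ∧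
      ∀ c d, IsLCA G r c u w' → IsLCA G r d u w → G.dist r c ≤ G.dist r d)
    (hii : auxConnected SOL (auxParts G r OPT a)) (hx : x ≠ a) (hy : y ≠ a) :
    H.ReachableAvoiding a x y := by
  have chain : ∀ S ∈ auxParts G r OPT a, ∀ T ∈ auxParts G r OPT a,
      ∀ x ∈ S, ∀ y ∈ T, H.ReachableAvoiding a x y := fun S hS T hT =>
    ReachableAvoiding.of_reflTransGen_auxAdj hSOL
      (fun _ => reachableAvoiding_of_mem_auxParts hG hGH hSOL hi) hS (hii S hS T hT)
  by_cases har : a = r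
  · subst har
    obtain ⟨S, hS, hxS⟩ := exists_mem_auxParts hG OPT onRootPath_root hx
    obtain ⟨T, hT, hyT⟩ := exists_mem_auxParts hG OPT onRootPath_root hy
    exact chain S hS T hT x hxS y hyT
  suffices to_root : ∀ x, x ≠ a → H.ReachableAvoiding a x r from
    (to_root x hx).trans (to_root y hy).symm
  intro x hx
  by_cases h : OnRootPath G r a x
  · obtain ⟨S, hS, hxS⟩ := exists_mem_auxParts hG OPT h hx
    obtain ⟨w, hw⟩ := exists_isGoodChild hG hOPT har h hx
    exact (chain S hS _ (.inr ⟨⟨w, hw⟩, rfl⟩) x hxS w (Set.mem_biUnion hw onRootPath_self)).trans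
      (hw.reachableAvoiding_root hG hGH hSOL hi onRootPath_self)
  · exact (reachableAvoiding_root_of_not_onRootPath h).mono hGH

end Augmentation

end

/-- If `OPT` augments the tree `G` to a 2-vertex-connected graph and `SOL` is a link set such
that (i) for every link `{u,v} ∈ OPT`, `SOL` contains a link `{u,v'}` with
`d_G(r, LCA(u,v')) ≤ d_G(r, LCA(u,v))` and a link `{u',v}` with
`d_G(r, LCA(u',v)) ≤ d_G(r, LCA(u,v))`, and (ii) for every vertex `a`, the auxiliary graph at `a`
(bad-child subtrees plus the union of good-child subtrees, with `SOL`-adjacency) is connected,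
then `SOL` also augments `G` to a 2-vertex-connected graph. -/
theorem stmt9 {V : Type*} [Fintype V] (G : SimpleGraph V) (r : V) (hG : G.IsTree)
    (h3 : 3 ≤ Fintype.card V)
    (OPT SOL : Set (Sym2 V))
    (hOPT : TwoVertexConnected (SimpleGraph.fromEdgeSet (G.edgeSet ∪ OPT)))
    (hi : ∀ u v : V, s(u, v) ∈ OPT →
      (∃ v' : V, s(u, v') ∈ SOL ∧ ∀ a b : V, IsLCA G r a u v' → IsLCA G r b u v →
        G.dist r a ≤ G.dist r b) ∧
      (∃ u' : V, s(u', v) ∈ SOL ∧ ∀ a b : V, IsLCA G r a u' v → IsLCA G r b u v →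
        G.dist r a ≤ G.dist r b))
    (hii : ∀ a : V, auxConnected SOL (auxParts G r OPT a)) :
    TwoVertexConnected (SimpleGraph.fromEdgeSet (G.edgeSet ∪ SOL)) := by
  have hGH : G ≤ fromEdgeSet (G.edgeSet ∪ SOL) := fun x y hxy =>
    (fromEdgeSet_adj _).2 ⟨.inl hxy, hxy.ne⟩
  have hSOL : ∀ ⦃x y⦄, s(x, y) ∈ SOL → x ≠ y → (fromEdgeSet (G.edgeSet ∪ SOL)).Adj x y :=
    fun _ _ h hne => (fromEdgeSet_adj _).2 ⟨.inr h, hne⟩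
  refine ⟨hG.connected.mono hGH, fun a => ?_⟩
  obtain ⟨b, hb⟩ := Fintype.exists_ne_of_one_lt_card (by omega) a
  exact connected_induce_compl_singleton_of_reachableAvoiding hb fun x y hx hy =>
    reachableAvoiding_of_ne hG hGH hSOL (hOPT.2 a).preconnected (fun u w h => (hi u w h).1)
      (hii a) hx hy
end

section
/- Let G = (V,E) be a 2-vertex-connected simple graph on n ≥ 3 vertices that is edge-minimal 2-vertex-connected, i.e., for every edge e ∈ E, the graph G − e is not 2-vertex-connected. Then |E| ≤ 2n − 2. -/
/-!
Deleting a chord `xy` of a cycle keeps a 2-connected graph 2-connected: the cycle splits into two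
`x`–`y` walks meeting only at `x` and `y`, so whichever vertex is removed, one of them still
replaces the edge `xy`. Hence in an edge-minimal 2-connected graph every cycle is induced.

In such a graph, let `p` be a longest path, starting at `u`. All neighbours of `u` lie on `p`, and
if `y`, `z` are two of them other than the second vertex of `p`, with `z` before `y` on `p`, then
`uz` is a chord of the cycle formed by `uy` and the segment of `p` up to `y`. So `u` has degree 1
or 2, and deleting its edges gives, by induction, `|E| ≤ 2 |supp G| - 2`.
-/

open SimpleGraph

namespace SimpleGraph

variable {V : Type*} {G : SimpleGraph V} {u v w x y : V}

lemma Walk.IsCycle.exists_internally_disjoint_walks {c : G.Walk v v} (hc : c.IsCycle)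
    (hx : x ∈ c.support) (hy : y ∈ c.support) :
    ∃ p q : G.Walk x y, p.edges ⊆ c.edges ∧ q.edges ⊆ c.edges ∧
      ∀ a ∈ p.support, a ∈ q.support → a = x ∨ a = y := by
  classical
  set c' := c.rotate x hx
  have hy' : y ∈ c'.support := (c.mem_support_rotate_iff x hx).2 hy
  have hc' : c'.edges ⊆ c.edges := fun e he ↦ (c.rotate_edges x hx).mem_iff.1 he
  refine ⟨c'.takeUntil y hy', (c'.dropUntil y hy').reverse,
    fun e he ↦ hc' (c'.edges_takeUntil_subset_edges hy' he), ?_, ?_⟩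
  · rw [Walk.edges_reverse]
    exact fun e he ↦ hc' (c'.edges_dropUntil_subset_edges hy' (List.mem_reverse.1 he))
  · intro a hat had
    by_contra! hne
    have hnodup : c'.support.tail.Nodup := (hc.rotate hx).support_nodup
    rw [← c'.take_spec hy', Walk.tail_support_append, List.nodup_append'] at hnodup
    rw [Walk.support_reverse, List.mem_reverse, ← Walk.cons_tail_support] at had
    rw [← Walk.cons_tail_support] at hat
    exact hnodup.2.2 ((List.mem_cons.1 hat).resolve_left hne.1)
      ((List.mem_cons.1 had).resolve_left hne.2)

lemma Reachable.of_forall_adj {H : SimpleGraph V} (h : ∀ ⦃u v⦄, G.Adj u v → H.Reachable u v)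
    (huv : G.Reachable u v) : H.Reachable u v := by
  obtain ⟨p⟩ := huv
  induction p with
  | nil => rfl
  | cons hadj _ ih => exact (h hadj).trans ih

def Chordless (G : SimpleGraph V) : Prop :=
  ∀ ⦃v : V⦄ (c : G.Walk v v), c.IsCycle → ∀ ⦃x y : V⦄, x ∈ c.support → y ∈ c.support →
    G.Adj x y → s(x, y) ∈ c.edges

lemma Chordless.anti {H : SimpleGraph V} (hHG : H ≤ G) (hG : G.Chordless) : H.Chordless := by
  intro v c hc x y hx hy hxy
  simpa [Walk.edges_mapLe_eq_edges] using hG (c.mapLe hHG) ((Walk.isCycle_mapLe hHG).2 hc)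
    (by simpa [Walk.support_mapLe_eq_support] using hx)
    (by simpa [Walk.support_mapLe_eq_support] using hy) (hHG hxy)

lemma Chordless.eq_snd_or_eq_of_adj (hG : G.Chordless) {q : G.Walk u y} (hq : q.IsPath)
    (huy : G.Adj u y) (hy : y ≠ q.snd) {z : V} (huz : G.Adj u z) (hz : z ∈ q.support) :
    z = q.snd ∨ z = y := by
  have hc : (Walk.cons huy q.reverse).IsCycle := by
    rw [Walk.cons_isCycle_iff, Walk.edges_reverse, List.mem_reverse]
    exact ⟨hq.reverse, fun h ↦ hy (hq.eq_snd_of_mem_edges h)⟩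
  have := hG _ hc (Walk.start_mem_support _) (by simp [hz]) huz
  rw [Walk.edges_cons, List.mem_cons, Walk.edges_reverse, List.mem_reverse, Sym2.congr_right]
    at this
  exact this.symm.imp_left hq.eq_snd_of_mem_edges

lemma Chordless.ncard_neighborSet_le_two [Finite V] (hG : G.Chordless) {p : G.Walk u w}
    (hp : p.IsPath) (hN : ∀ y, G.Adj u y → y ∈ p.support) : (G.neighborSet u).ncard ≤ 2 := by
  classical
  have hprefix : ∀ y z (huy : G.Adj u y) (huz : G.Adj u z), y ≠ p.snd → z ≠ p.snd →
      (p.takeUntil z (hN z huz)).support <+: (p.takeUntil y (hN y huy)).support → z = y := by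
    intro y z huy huz hy hz h
    have hsnd := p.snd_takeUntil huy.ne' (hN y huy)
    have := hG.eq_snd_or_eq_of_adj (hp.takeUntil _) huy (hsnd ▸ hy) huz
      (h.subset (Walk.end_mem_support _))
    exact (hsnd ▸ this).resolve_left hz
  have hpair : ∀ y z, G.Adj u y → G.Adj u z → y ≠ p.snd → z ≠ p.snd → y = z := by
    intro y z huy huz hy hz
    obtain h | h := List.prefix_or_prefix_of_prefix (p.support_takeUntil_prefix_support (hN y huy))
      (p.support_takeUntil_prefix_support (hN z huz))
    · exact hprefix z y huz huy hz hy h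
    · exact (hprefix y z huy huz hy hz h).symm
  by_contra! h
  obtain ⟨a, b, c, ha, hb, hc, hab, hac, hbc⟩ := (Set.two_lt_ncard_iff).1 h
  obtain rfl | ha' := eq_or_ne a p.snd
  · exact hbc (hpair b c hb hc hab.symm hac.symm)
  obtain rfl | hb' := eq_or_ne b p.snd
  · exact hac (hpair a c ha hc ha' hbc.symm)
  · exact hab (hpair a b ha hb ha' hb')

lemma Chordless.exists_adj_ncard_neighborSet_le_two [Finite V] (hG : G.Chordless)
    (hE : G.edgeSet.Nonempty) : ∃ u v, G.Adj u v ∧ (G.neighborSet u).ncard ≤ 2 := by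
  classical
  have := Fintype.ofFinite V
  obtain ⟨e, he⟩ := hE
  induction e using Sym2.ind with | _ x y => ?_
  have : Nonempty (Σ u w : V, G.Path u w) := ⟨⟨x, x, Path.nil⟩⟩
  obtain ⟨⟨u, w, p⟩, hmax⟩ := Finite.exists_max fun p : Σ u w : V, G.Path u w ↦ p.2.2.1.length
  have hN : ∀ y, G.Adj u y → y ∈ p.1.support := by
    intro y huy
    by_contra hy
    simpa using hmax ⟨y, w, ⟨Walk.cons huy.symm p.1, p.2.cons hy⟩⟩
  have hlen : 1 ≤ p.1.length := hmax ⟨x, y, Path.singleton he⟩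
  exact ⟨u, p.1.snd, p.1.adj_snd (Walk.not_nil_iff_lt_length.2 hlen),
    hG.ncard_neighborSet_le_two p.2 hN⟩

lemma ncard_edgeSet_deleteIncidenceSet_add [Finite V] (G : SimpleGraph V) (x : V) :
    (G.deleteIncidenceSet x).edgeSet.ncard + (G.neighborSet x).ncard = G.edgeSet.ncard := by
  classical
  rw [edgeSet_deleteIncidenceSet, ← Set.ncard_sdiff_add_ncard_of_subset (G.incidenceSet_subset x)]
  exact congrArg (_ + ·) (Nat.card_congr (G.incidenceSetEquivNeighborSet x).symm)

lemma ncard_support_deleteIncidenceSet_lt [Finite V] (hx : x ∈ G.support) :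
    (G.deleteIncidenceSet x).support.ncard < G.support.ncard := by
  classical
  exact Set.ncard_lt_ncard <| (G.support_deleteIncidenceSet_subset x).trans_ssubset
    (Set.sdiff_singleton_ssubset.2 hx)

theorem Chordless.ncard_edgeSet_le [Finite V] (hG : G.Chordless) :
    G.edgeSet.ncard ≤ 2 * G.support.ncard - 2 := by
  induction hn : G.edgeSet.ncard using Nat.strong_induction_on generalizing G with | _ n ih
  obtain hE | hE := G.edgeSet.eq_empty_or_nonempty
  · simp [hE] at hn
    omega
  obtain ⟨u, v, huv, hdeg⟩ := hG.exists_adj_ncard_neighborSet_le_two hE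
  have hpos : 0 < (G.neighborSet u).ncard := (Set.ncard_pos).2 ⟨v, huv⟩
  have hedges := G.ncard_edgeSet_deleteIncidenceSet_add u
  have hH := ih _ (by omega) (hG.anti (G.deleteIncidenceSet_le u)) rfl
  have hsupp := ncard_support_deleteIncidenceSet_lt (G := G) ⟨v, huv⟩
  have htwo : 2 ≤ G.support.ncard := by
    rw [← Set.ncard_pair huv.ne]
    exact Set.ncard_le_ncard <|
      Set.insert_subset_iff.2 ⟨⟨v, huv⟩, Set.singleton_subset_iff.2 ⟨u, huv.symm⟩⟩
  omega

end SimpleGraph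

theorem TwoVertexConnected.deleteEdges_of_isCycle {V : Type*} {G : SimpleGraph V} {v x y : V}
    (h2 : TwoVertexConnected G) {c : G.Walk v v} (hc : c.IsCycle) (hx : x ∈ c.support)
    (hy : y ∈ c.support) (hxy : s(x, y) ∉ c.edges) :
    TwoVertexConnected (G.deleteEdges {s(x, y)}) := by
  obtain ⟨p, q, hp, hq, hpq⟩ := hc.exists_internally_disjoint_walks hx hy
  refine ⟨h2.1.connected_delete_edge_of_not_isBridge ?_, fun a ↦ ?_⟩
  · rw [isBridge_iff_forall_walk_mem_edges]
    exact fun h ↦ hxy (hp (h p))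
  have hdetour : ∀ (hxa : x ∈ ({a}ᶜ : Set V)) (hya : y ∈ ({a}ᶜ : Set V)),
      ((G.deleteEdges {s(x, y)}).induce {a}ᶜ).Reachable ⟨x, hxa⟩ ⟨y, hya⟩ := by
    intro hxa hya
    obtain ⟨W, hW, haW⟩ : ∃ W : G.Walk x y, W.edges ⊆ c.edges ∧ a ∉ W.support := by
      by_cases ha : a ∈ p.support
      · exact ⟨q, hq, fun ha' ↦ (hpq a ha ha').elim (fun h ↦ hxa h.symm) fun h ↦ hya h.symm⟩
      · exact ⟨p, hp, ha⟩
    have hWxy : ∀ e ∈ W.edges, e ∉ ({s(x, y)} : Set (Sym2 V)) :=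
      fun e he h ↦ hxy (Set.mem_singleton_iff.1 h ▸ hW he)
    have hWa : ∀ z ∈ (W.toDeleteEdges _ hWxy).support, z ∈ ({a}ᶜ : Set V) := by
      intro z hz (hza : z = a)
      exact haW (hza ▸ by simpa using hz)
    exact ((W.toDeleteEdges _ hWxy).induce _ hWa).reachable
  rw [connected_iff]
  refine ⟨fun u w ↦ ((h2.2 a).preconnected u w).of_forall_adj ?_, (h2.2 a).nonempty⟩
  rintro ⟨u, hu⟩ ⟨w, hw⟩ huw
  by_cases he : s(u, w) = s(x, y)
  · obtain ⟨rfl, rfl⟩ | ⟨rfl, rfl⟩ := Sym2.eq_iff.1 he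
    · exact hdetour hu hw
    · exact (hdetour hw hu).symm
  · exact Adj.reachable (by simpa [he] using huw)

theorem stmt11_general {V : Type*} [Fintype V] (G : SimpleGraph V)
    (h2 : TwoVertexConnected G)
    (hmin : ∀ e ∈ G.edgeSet, ¬ TwoVertexConnected (G.deleteEdges {e})) :
    G.edgeSet.ncard ≤ 2 * Fintype.card V - 2 := by
  have hG : G.Chordless := fun _ c hc _ _ hx hy hxy ↦
    by_contra fun h ↦ hmin _ hxy (h2.deleteEdges_of_isCycle hc hx hy h)
  have hsupp : G.support.ncard ≤ Fintype.card V := by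
    simpa using Set.ncard_le_ncard (Set.subset_univ G.support)
  have := hG.ncard_edgeSet_le
  omega

/-- Any edge-minimal 2-vertex-connected graph on `n ≥ 3` vertices has at most `2n − 2` edges. -/
theorem stmt11 {V : Type*} [Fintype V] (G : SimpleGraph V)
    (h3 : 3 ≤ Fintype.card V)
    (h2 : TwoVertexConnected G)
    (hmin : ∀ e ∈ G.edgeSet, ¬ TwoVertexConnected (G.deleteEdges {e})) :
    G.edgeSet.ncard ≤ 2 * Fintype.card V - 2 :=
  stmt11_general G h2 hmin
end

section
/- Let H be a finite simple graph on n ≥ 2 vertices, and let x_1, x_2, …, x_n be an enumeration of its vertex set with u = x_1 and v = x_n such that d_H(u, x_{j−1}) ≤ d_H(u, x_j) for all 2 ≤ j ≤ n−1 (distances valued in ℕ ∪ {∞}). Suppose there are indices 1 = i_1 < i_2 < … < i_s and j_1 < j_2 < … < j_s = n with i_k < j_k for all 1 ≤ k ≤ s, i_k < j_{k−1} for all 2 ≤ k ≤ s, and {x_{i_k}, x_{j_k}} ∈ E(H) for all 1 ≤ k ≤ s. Then d_H(u, v) ≤ s. -/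
/-!
Each edge `x (i k) — x (j k)` is entered at a vertex `x (i k)` that precedes `x (j (k-1))` in the
ordering, so by monotonicity of `d(u, ·)` along the ordering it is at most as far from `u` as
`x (j (k-1))`. Crossing the edge costs one step, hence `d(u, x (j k)) ≤ k + 1` by induction on `k`,
and `x (j (s-1)) = v`.
-/

theorem Fin.monotoneOn_of_le_pred {α : Type*} [Preorder α] {n N : ℕ} (hN : N < n)
    (f : Fin n → α)
    (hf : ∀ k (_ : 1 ≤ k) (hk : k ≤ N), f ⟨k - 1, by omega⟩ ≤ f ⟨k, by omega⟩) :
    MonotoneOn f {k | (k : ℕ) ≤ N} := by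
  let g : ℕ → α := fun k ↦ f ⟨min k N, by omega⟩
  have hg : Monotone g := monotone_nat_of_le_succ fun k ↦ by
    by_cases hk : k + 1 ≤ N
    · simpa [g, Nat.min_eq_left hk, Nat.min_eq_left (Nat.le_of_succ_le hk)] using
        hf (k + 1) (by omega) hk
    · simp only [g, Nat.min_eq_right (Nat.le_of_not_lt hk), Nat.min_eq_right (by omega : N ≤ k + 1)]
      exact le_rfl
  intro a ha b hb hab
  simpa [g, Nat.min_eq_left ha, Nat.min_eq_left hb] using hg (Fin.le_def.mp hab)

namespace SimpleGraph

theorem edist_le_of_adj_chain {V : Type*} (G : SimpleGraph V) {u : V} {m : ℕ}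
    (a b : Fin (m + 1) → V) (h0 : a 0 = u) (hadj : ∀ k, G.Adj (a k) (b k))
    (hstep : ∀ k : Fin m, G.edist u (a k.succ) ≤ G.edist u (b k.castSucc))
    (k : Fin (m + 1)) : G.edist u (b k) ≤ (k : ℕ) + 1 := by
  induction k using Fin.induction with
  | zero => simpa [← h0] using (edist_eq_one_iff_adj.mpr (hadj 0)).le
  | succ k ih =>
    calc G.edist u (b k.succ) ≤ G.edist u (a k.succ) + G.edist (a k.succ) (b k.succ) :=
          G.edist_triangle
      _ ≤ G.edist u (b k.castSucc) + 1 :=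
          add_le_add (hstep k) (edist_eq_one_iff_adj.mpr (hadj _)).le
      _ ≤ ((k : ℕ) + 1) + 1 := by gcongr; simpa using ih
      _ = ((k.succ : ℕ) : ℕ∞) + 1 := by simp

end SimpleGraph

/-- Let `H` be a finite simple graph on `n ≥ 2` vertices with an enumeration
`x 0, x 1, …, x (n-1)` of its vertex set (0-based indexing of `x_1, …, x_n`), `u = x 0`,
`v = x (n-1)`, such that `d_H(u, x (j-1)) ≤ d_H(u, x j)` for all `1 ≤ j ≤ n−2`
(i.e. `2 ≤ j ≤ n−1` in 1-based indexing). Suppose there are indices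
`i 0 < … < i (s-1)` and `j 0 < … < j (s-1)` with `i 0 = 0`, `j (s-1) = n−1`, `i k < j k`
for all `k`, `i k < j (k−1)` for all `k ≥ 1`, and `{x (i k), x (j k)} ∈ E(H)` for all `k`.
Then `d_H(u, v) ≤ s` (distances in `ℕ∞`, with `∞` if no path exists). -/
theorem stmt13 {V : Type*} (H : SimpleGraph V) (n s : ℕ)
    (hn : 2 ≤ n) (x : Fin n → V)
    (u v : V)
    (hu : u = x ⟨0, by omega⟩) (hv : v = x ⟨n - 1, by omega⟩)
    (hord : ∀ jdx : ℕ, ∀ _h1 : 1 ≤ jdx, ∀ _h2 : jdx ≤ n - 2,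
      H.edist u (x ⟨jdx - 1, by omega⟩) ≤ H.edist u (x ⟨jdx, by omega⟩))
    (hs : 0 < s) (i j : Fin s → Fin n)
    (hj : StrictMono j)
    (hi0 : (i ⟨0, hs⟩ : ℕ) = 0)
    (hjlast : (j ⟨s - 1, Nat.sub_lt hs one_pos⟩ : ℕ) = n - 1)
    (hij2 : ∀ k : Fin s, 1 ≤ (k : ℕ) →
      (i k : ℕ) < (j ⟨(k : ℕ) - 1, lt_of_le_of_lt (Nat.sub_le _ _) k.isLt⟩ : ℕ))
    (hedge : ∀ k : Fin s, H.Adj (x (i k)) (x (j k))) :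
    H.edist u v ≤ (s : ℕ∞) := by
  obtain ⟨m, rfl⟩ : ∃ m, s = m + 1 := ⟨s - 1, by omega⟩
  have hjv : x (j (Fin.last m)) = v := by rw [hv]; congr; exact Fin.ext hjlast
  have hstep (k : Fin m) : H.edist u (x (i k.succ)) ≤ H.edist u (x (j k.castSucc)) := by
    have hij : (i k.succ : ℕ) < j k.castSucc := hij2 k.succ (by simp)
    have hjn : (j k.castSucc : ℕ) < n - 1 := hjlast ▸ hj (Fin.castSucc_lt_last k)
    exact Fin.monotoneOn_of_le_pred (N := n - 2) (by omega) (fun k ↦ H.edist u (x k)) hord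
      (show (i k.succ : ℕ) ≤ n - 2 by omega) (show (j k.castSucc : ℕ) ≤ n - 2 by omega)
      (Fin.le_def.mpr hij.le)
  have hchain := H.edist_le_of_adj_chain (x ∘ i) (x ∘ j)
    (by rw [hu]; exact congrArg x (Fin.ext hi0)) hedge hstep (Fin.last m)
  simpa [hjv] using hchain
end

section
/- Let t ≥ 1 be an integer and let G be a finite simple graph on n ≥ 3 vertices whose girth is at least 2t + 2 (i.e., every cycle in G has length at least 2t + 2). Let uv ∈ E(G) and let H = G − uv be the graph obtained by deleting the edge uv. Let x_1, x_2, …, x_n be an enumeration of the vertex set with x_1 = u and x_n = v such that d_H(u, x_{j−1}) ≤ d_H(u, x_j) for all 2 ≤ j ≤ n−1 (distances valued in ℕ ∪ {∞}), and let P be the path graph with edges {x_i, x_{i+1}} for 1 ≤ i ≤ n−1. If S ⊆ E(H) is a set of edges such that the graph with edge set E(P) ∪ S on the vertex set of G is 2-vertex-connected, then |S| ≥ 2t + 1. -/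
open SimpleGraph
open scoped ENNReal

/-!
Deleting `uv` leaves `d_H(u, v) ≥ 2t + 1`, since a shorter `u`–`v` path in `H` would close a cycle
of length at most `2t + 1` with `uv`. For each level `r ≤ 2t`, let `x_j` be the first vertex of the
enumeration (but at most `x_{n-2}`) with `d_H(u, x_j) > r`. As the graph stays connected after
deleting `x_j`, some edge jumps over `x_j`; it is not a path edge, so it lies in `S`, and it joins a
vertex at distance `≤ r` to one at distance `> r`. The endpoints of an edge of `H` have distances
differing by at most one, so the smaller distance determines `r`, and these `2t + 1` edges are
distinct.
-/

namespace SimpleGraph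

variable {V : Type*} {G H : SimpleGraph V}

theorem le_edist_deleteEdges_of_forall_isCycle {k : ℕ}
    (hgirth : ∀ (a : V) (c : G.Walk a a), c.IsCycle → k + 1 ≤ c.length) {u v : V}
    (huv : G.Adj u v) : (k : ℕ∞) ≤ (G.deleteEdges {s(u, v)}).edist u v := by
  classical
  refine le_iInf fun W => ?_
  have hle : G.deleteEdges {s(u, v)} ≤ G := deleteEdges_le _
  have huvP : s(u, v) ∉ (W.reverse.bypass.mapLe hle).edges := by
    rw [Walk.edges_mapLe_eq_edges]
    intro h
    simpa using W.reverse.bypass.edges_subset_edgeSet h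
  have hcyc := Path.cons_isCycle ⟨_, W.reverse.bypass_isPath.mapLe hle⟩ huv huvP
  have hP : W.reverse.bypass.length ≤ W.length :=
    W.length_reverse ▸ W.reverse.length_bypass_le_length
  have := hgirth u _ hcyc
  simp only [Walk.length_cons, Walk.length_mapLe] at this
  exact_mod_cast (by omega : k ≤ W.length)

theorem exists_mem_lt_lt_of_preconnected_induce_compl {P S : Set (Sym2 V)} {f : V → ℕ}
    (hf : Function.Injective f) (hP : ∀ p q, s(p, q) ∈ P → f q ≤ f p + 1) {w a b : V}
    (hconn : ((fromEdgeSet (P ∪ S)).induce ({w}ᶜ : Set V)).Preconnected)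
    (ha : f a < f w) (hb : f w < f b) :
    ∃ p q, s(p, q) ∈ S ∧ f p < f w ∧ f w < f q := by
  have haw : a ∈ ({w}ᶜ : Set V) := fun h => ha.ne (congrArg f h)
  have hbw : b ∈ ({w}ᶜ : Set V) := fun h => hb.ne' (congrArg f h)
  obtain ⟨W⟩ := hconn ⟨a, haw⟩ ⟨b, hbw⟩
  obtain ⟨d, -, hp, hq⟩ := W.exists_boundary_dart {z | f z < f w} ha hb.not_gt
  have hqw : f w < f d.snd := lt_of_le_of_ne (not_lt.mp hq) fun h => d.snd.2 (hf h.symm)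
  have hadj : (fromEdgeSet (P ∪ S)).Adj d.fst d.snd := d.adj
  have hS : s(d.fst.1, d.snd.1) ∈ S := ((fromEdgeSet_adj _).mp hadj).1.resolve_left fun h => by
    have := hP _ _ h
    have hp' : f d.fst < f w := hp
    omega
  exact ⟨d.fst, d.snd, hS, hp, hqw⟩

theorem le_ncard_of_forall_exists_edist_le_lt [Finite V] {S : Set (Sym2 V)}
    (hS : S ⊆ H.edgeSet) (u : V) (k : ℕ)
    (hcross : ∀ r < k, ∃ p q, s(p, q) ∈ S ∧ H.edist u p ≤ r ∧ (r : ℕ∞) < H.edist u q) :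
    k ≤ S.ncard := by
  let level : Sym2 V → ℕ :=
    Sym2.lift ⟨fun p q => (min (H.edist u p) (H.edist u q)).toNat,
      fun _ _ => congrArg ENat.toNat (min_comm _ _)⟩
  have hsub : Set.Iio k ⊆ level '' S := by
    intro r hr
    obtain ⟨p, q, hpq, hp, hq⟩ := hcross r hr
    have hqp : H.edist u q ≤ H.edist u p + 1 := by
      calc H.edist u q ≤ H.edist u p + H.edist p q := SimpleGraph.edist_triangle
        _ = H.edist u p + 1 := by rw [edist_eq_one_iff_adj.mpr (hS hpq)]
    have hpr : H.edist u p = r := by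
      refine le_antisymm hp (Order.le_of_lt_add_one ?_)
      exact hq.trans_le hqp
    refine ⟨s(p, q), hpq, ?_⟩
    simp [level, hpr, min_eq_left hq.le]
  calc k = (Set.Iio k).ncard := (Set.ncard_Iio_nat k).symm
    _ ≤ (level '' S).ncard := Set.ncard_le_ncard hsub
    _ ≤ S.ncard := Set.ncard_image_le

end SimpleGraph

theorem Nat.exists_threshold_of_monotoneOn {α : Type*} [LinearOrder α] {a : ℕ → α} {N : ℕ} {r : α}
    (hmono : MonotoneOn a (Set.Iic N)) (h0 : a 0 ≤ r) (hN : 1 ≤ N) :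
    ∃ j, 1 ≤ j ∧ j ≤ N ∧ (∀ i < j, a i ≤ r) ∧ ∀ i, j < i → i ≤ N → r < a i := by
  classical
  have hex : ∃ i, r < a i ∨ N ≤ i := ⟨N, Or.inr le_rfl⟩
  refine ⟨Nat.find hex, ?_, ?_, fun i hi => ?_, fun i hi hiN => ?_⟩
  · by_contra! h
    have := Nat.find_spec hex
    rw [Nat.lt_one_iff.mp h] at this
    rcases this with h' | h' <;> [exact h0.not_gt h'; omega]
  · exact Nat.find_le (Or.inr le_rfl)
  · exact not_lt.mp (not_or.mp (Nat.find_min hex hi)).1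
  · have hjN : Nat.find hex < N := hi.trans_le hiN
    have hj := (Nat.find_spec hex).resolve_right hjN.not_ge
    exact hj.trans_le (hmono (Set.mem_Iic.mpr hjN.le) (Set.mem_Iic.mpr hiN) hi.le)

/-- Let `G` be a graph on `n ≥ 3` vertices in which every cycle has length at least `2t+2`
(girth ≥ 2t+2), let `uv ∈ E(G)` and `H = G − uv`. Enumerate the vertices as
`x 0 = u, x 1, …, x (n-1) = v` so that `d_H(u, x (j-1)) ≤ d_H(u, x j)` for `1 ≤ j ≤ n−2`
(i.e. `2 ≤ j ≤ n−1` in 1-based indexing), and let `Pedges` be the edges of the path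
`x 0 — x 1 — ⋯ — x (n-1)`. If `S ⊆ E(H)` is a set of edges such that the graph with edge set
`Pedges ∪ S` is 2-vertex-connected, then `|S| ≥ 2t + 1`. -/
theorem stmt14 {V : Type*} [Fintype V] (t n : ℕ) (hn : 3 ≤ n)
    (G : SimpleGraph V)
    (hgirth : ∀ (a : V) (c : G.Walk a a), c.IsCycle → 2 * t + 2 ≤ c.length)
    (u v : V) (huv : G.Adj u v)
    (H : SimpleGraph V) (hH : H = G.deleteEdges {s(u, v)})
    (x : Fin n → V) (hx : Function.Bijective x)
    (hx0 : x ⟨0, by omega⟩ = u) (hxlast : x ⟨n - 1, by omega⟩ = v)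
    (hord : ∀ jdx : ℕ, ∀ _h1 : 1 ≤ jdx, ∀ _h2 : jdx ≤ n - 2,
      H.edist u (x ⟨jdx - 1, by omega⟩) ≤ H.edist u (x ⟨jdx, by omega⟩))
    (Pedges : Set (Sym2 V))
    (hP : Pedges = {e : Sym2 V | ∃ idx : ℕ, ∃ h : idx + 1 < n,
      e = s(x ⟨idx, by omega⟩, x ⟨idx + 1, h⟩)})
    (S : Set (Sym2 V)) (hS : S ⊆ H.edgeSet)
    (h2 : TwoVertexConnected (SimpleGraph.fromEdgeSet (Pedges ∪ S))) :
    2 * t + 1 ≤ S.ncard := by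
  let e := Equiv.ofBijective x hx
  let pos : V → ℕ := fun z => e.symm z
  have pos_x : ∀ i (h : i < n), pos (x ⟨i, h⟩) = i := fun i h =>
    congrArg Fin.val (e.symm_apply_apply ⟨i, h⟩)
  have pos_inj : Function.Injective pos := Fin.val_injective.comp e.symm.injective
  let a : ℕ → ℕ∞ := fun i => if h : i < n then H.edist u (x ⟨i, h⟩) else ⊤
  have a_pos : ∀ z, a (pos z) = H.edist u z := fun z => by
    simp only [a, pos, dif_pos (e.symm z).2, Fin.eta]
    exact congrArg (H.edist u) (e.apply_symm_apply z)
  have a_zero : a 0 = 0 := by simp only [a, dif_pos (by omega : 0 < n), hx0, edist_self]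
  have hmono : MonotoneOn a (Set.Iic (n - 2)) :=
    monotoneOn_of_le_succ Set.ordConnected_Iic fun i _ _ hi => by
      simp only [Order.succ_eq_add_one, Set.mem_Iic] at hi
      simp only [a, Order.succ_eq_add_one, dif_pos (show i < n by omega),
        dif_pos (show i + 1 < n by omega)]
      exact hord (i + 1) (by omega) hi
  have hdist_uv : ((2 * t + 1 : ℕ) : ℕ∞) ≤ H.edist u v :=
    hH ▸ le_edist_deleteEdges_of_forall_isCycle hgirth huv
  have path_adj : ∀ p q, s(p, q) ∈ Pedges → pos q ≤ pos p + 1 := by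
    rintro p q hpq
    obtain ⟨i, hi, he⟩ := hP ▸ hpq
    rcases Sym2.eq_iff.mp he with ⟨rfl, rfl⟩ | ⟨rfl, rfl⟩ <;> simp only [pos_x] <;> omega
  refine le_ncard_of_forall_exists_edist_le_lt hS u _ fun r hr => ?_
  obtain ⟨j, hj1, hjN, hlow, hhigh⟩ :=
    Nat.exists_threshold_of_monotoneOn hmono (r := (r : ℕ∞)) (a_zero.trans_le zero_le) (by omega)
  obtain ⟨p, q, hpqS, hp, hq⟩ := exists_mem_lt_lt_of_preconnected_induce_compl pos_inj
    path_adj (h2.2 (x ⟨j, by omega⟩)).preconnected (a := u) (b := v)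
    (by rw [← hx0, pos_x, pos_x]; omega) (by rw [← hxlast, pos_x, pos_x]; omega)
  rw [pos_x] at hp hq
  refine ⟨p, q, hpqS, a_pos p ▸ hlow _ hp, ?_⟩
  by_cases hqN : pos q ≤ n - 2
  · exact a_pos q ▸ hhigh _ hq hqN
  · have hqn : pos q < n := (e.symm q).2
    obtain rfl : q = v := pos_inj (by rw [← hxlast, pos_x]; omega)
    exact lt_of_lt_of_le (by exact_mod_cast hr) hdist_uv
end
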